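/- Define Γ^{0n} := {T ∈ 𝒢^× : T (𝒢^0 + 𝒢^n) T^{-1} ⊆ 𝒢^0 + 𝒢^n} and Γ̌^{0n} := {T ∈ 𝒢^× : T̂ (𝒢^0 + 𝒢^n) T^{-1} ⊆ 𝒢^0 + 𝒢^n}. Then: Γ^{0n} = 𝒢^× if n is odd and Γ^{0n} = (𝒢^{(0)×} ∪ 𝒢^{(1)×})(𝒢^0 + rad 𝒢)^× if n is even; and Γ̌^{0n} = (𝒢^{(0)×} ∪ 𝒢^{(1)×})(𝒢^0 + 𝒢^n)^× if n is odd and Γ̌^{0n} = 𝒢^{(0)×} ∪ 𝒢^{(1)×} if n is even. -/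

import Mathlib

open Pointwise

noncomputable section

namespace ClGA

variable (𝔽 : Type*) [RCLike 𝔽] (p q r : ℕ)

/-- The diagonal weights: `p` ones, `q` minus-ones, `r` zeros. -/
def w : Fin (p + q + r) → 𝔽 := fun i =>
  if (i : ℕ) < p then 1 else if (i : ℕ) < p + q then -1 else 0

/-- The quadratic form on `𝔽^n` whose Gram matrix is `diag(1,…,1,−1,…,−1,0,…,0)`. -/
def Q : QuadraticForm 𝔽 (Fin (p + q + r) → 𝔽) :=
  QuadraticMap.weightedSumSquares 𝔽 (w 𝔽 p q r)

/-- The degenerate Clifford geometric algebra `𝒢 = 𝒢_{p,q,r}`. -/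
abbrev G := CliffordAlgebra (Q 𝔽 p q r)

/-- The generators `e_a`, `a = 1, …, n`. -/
def e (a : Fin (p + q + r)) : G 𝔽 p q r :=
  CliffordAlgebra.ι (Q 𝔽 p q r) (Pi.single a 1)

/-- The even subspace `𝒢^{(0)}`: the `+1`-eigenspace of the grade involution. -/
def Geven : Submodule 𝔽 (G 𝔽 p q r) where
  carrier := {x | CliffordAlgebra.involute x = x}
  add_mem' := by
    intro a b ha hb
    simp only [Set.mem_setOf_eq, map_add] at ha hb ⊢
    rw [ha, hb]
  zero_mem' := by simp
  smul_mem' := by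
    intro c x hx
    simp only [Set.mem_setOf_eq, map_smul] at hx ⊢
    rw [hx]

/-- The odd subspace `𝒢^{(1)}`: the `−1`-eigenspace of the grade involution. -/
def Godd : Submodule 𝔽 (G 𝔽 p q r) where
  carrier := {x | CliffordAlgebra.involute x = -x}
  add_mem' := by
    intro a b ha hb
    simp only [Set.mem_setOf_eq, map_add] at ha hb ⊢
    rw [ha, hb, neg_add]
  zero_mem' := by simp
  smul_mem' := by
    intro c x hx
    simp only [Set.mem_setOf_eq, map_smul] at hx ⊢
    rw [hx, smul_neg]

/-- The grade-1 subspace `𝒢^1`, the span of the generators. -/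
def G1 : Submodule 𝔽 (G 𝔽 p q r) := Submodule.span 𝔽 (Set.range (e 𝔽 p q r))

/-- The scalar (grade-0) subspace `𝒢^0 = 𝔽·1`. -/
def G0 : Submodule 𝔽 (G 𝔽 p q r) := Submodule.span 𝔽 {(1 : G 𝔽 p q r)}

/-- The element `e_{1…n} = e_1 e_2 ⋯ e_n`. -/
def eTop : G 𝔽 p q r := (List.ofFn (e 𝔽 p q r)).prod

/-- The grade-`n` subspace `𝒢^n = 𝔽·e_{1…n}`. -/
def Gn : Submodule 𝔽 (G 𝔽 p q r) := Submodule.span 𝔽 {eTop 𝔽 p q r}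

/-- The Grassmann subalgebra `Λ_r` generated by the null generators. -/
def Λr : Subalgebra 𝔽 (G 𝔽 p q r) :=
  Algebra.adjoin 𝔽 {x | ∃ a : Fin (p + q + r), p + q ≤ (a : ℕ) ∧ x = e 𝔽 p q r a}

/-- `Λ_r` viewed as a subspace of `𝒢`. -/
def Λrs : Submodule 𝔽 (G 𝔽 p q r) := Subalgebra.toSubmodule (Λr 𝔽 p q r)

/-- The even part `Λ_r^{(0)} = Λ_r ∩ 𝒢^{(0)}`. -/
def Λr0 : Submodule 𝔽 (G 𝔽 p q r) := Λrs 𝔽 p q r ⊓ Geven 𝔽 p q r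

/-- The Jacobson radical `rad 𝒢` of `𝒢`: the two-sided ideal generated by the
null generators. -/
def radG : Submodule 𝔽 (G 𝔽 p q r) :=
  Submodule.span 𝔽 {x | ∃ (u v : G 𝔽 p q r) (a : Fin (p + q + r)),
    p + q ≤ (a : ℕ) ∧ x = u * e 𝔽 p q r a * v}

/-- `rad 𝒢^{(0)} = rad 𝒢 ∩ 𝒢^{(0)}`. -/
def radG0 : Submodule 𝔽 (G 𝔽 p q r) := radG 𝔽 p q r ⊓ Geven 𝔽 p q r

/-- For a subset `S ⊆ 𝒢`, `S^×` denotes those elements of `S` invertible in `𝒢`. -/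
def ux (S : Set (G 𝔽 p q r)) : Set (G 𝔽 p q r) := {x ∈ S | IsUnit x}

/-- `𝒢^{(0)×} ∪ 𝒢^{(1)×}` (the group `P^±_{p,q,r}`). -/
def Epm : Set (G 𝔽 p q r) :=
  ux 𝔽 p q r ↑(Geven 𝔽 p q r) ∪ ux 𝔽 p q r ↑(Godd 𝔽 p q r)

/-- `(T⁻¹)^̂ · T`, the grade involution of the inverse times `T`. -/
def tw (T : G 𝔽 p q r) : G 𝔽 p q r :=
  CliffordAlgebra.involute (Ring.inverse T) * T

/-- The invertible elements `T` with `T W T⁻¹ ⊆ W` (adjoint representation). -/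
def gammaAd (W : Submodule 𝔽 (G 𝔽 p q r)) : Set (G 𝔽 p q r) :=
  {T | IsUnit T ∧ ∀ U ∈ W, T * U * Ring.inverse T ∈ W}

/-- The invertible elements `T` with `T̂ W T⁻¹ ⊆ W` (twisted adjoint representation). -/
def gammaTw (W : Submodule 𝔽 (G 𝔽 p q r)) : Set (G 𝔽 p q r) :=
  {T | IsUnit T ∧ ∀ U ∈ W, CliffordAlgebra.involute T * U * Ring.inverse T ∈ W}

/-!
Write `I = e_{1…n}` and `W = 𝒢⁰ + 𝒢ⁿ = span {1, I}`. Since `I² ∈ 𝔽` and `1, I` are linearly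
independent (contract with `e_1`), `W` is a commutative subalgebra. Each generator commutes with `I`
if `n` is odd and anticommutes with it if `n` is even, so `I` is central for odd `n`, while
`I x = x̂ I` for even `n`.

For odd `n`, `W` is central, whence `Γ^{0n} = 𝒢^×`. A twisted `T` satisfies `T̂ = w T` with `w ∈ W`
and `ŵ w = 1`; then `S = 1 ± ŵ` is a unit of `W` with `w S = ± Ŝ`, which makes `T S⁻¹` homogeneous.

For even `n`, `T I T⁻¹ = α + β I` squares to `I²`, so `αβ = 0`; as `I` is not a scalar, `α = 0`
and `I (T̂ - β T) = 0`. The annihilator of `I` is `rad 𝒢` (kill the null generators, then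
contract), and `rad 𝒢` is nilpotent; hence `β = ±1` and `T` is its homogeneous part
`(T + β T̂)/2` times an element of `1 + rad 𝒢`. In the twisted case `w = T̂ T⁻¹ ∈ W` satisfies
`w² = 1`, and `w = β I` is impossible, so `w = ±1`.
-/

instance : Nontrivial (G 𝔽 p q r) :=
  letI := invertibleOfNonzero (two_ne_zero' 𝔽)
  inferInstance

def eProd (l : List (Fin (p + q + r))) : G 𝔽 p q r := (l.map (e 𝔽 p q r)).prod

section

variable {𝔽 p q r}
open CliffordAlgebra

local notation "𝒢" => G 𝔽 p q r
local notation "𝐞" => e 𝔽 p q r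
local notation "𝐈" => eTop 𝔽 p q r
local notation "𝒲" => G0 𝔽 p q r ⊔ Gn 𝔽 p q r

/-! ### Generators and their products -/

lemma w_mul_self_of_lt {a : Fin (p + q + r)} (ha : (a : ℕ) < p + q) :
    w 𝔽 p q r a * w 𝔽 p q r a = 1 := by
  unfold w; split_ifs <;> norm_num

lemma w_eq_zero_of_null {a : Fin (p + q + r)} (ha : p + q ≤ (a : ℕ)) : w 𝔽 p q r a = 0 := by
  unfold w; split_ifs <;> first | rfl | omega

lemma Q_single (a : Fin (p + q + r)) : Q 𝔽 p q r (Pi.single a 1) = w 𝔽 p q r a := by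
  simp [Q, QuadraticMap.weightedSumSquares_apply, Pi.single_apply]

lemma e_mul_self (a : Fin (p + q + r)) : 𝐞 a * 𝐞 a = w 𝔽 p q r a • 1 := by
  rw [e, ι_sq_scalar, Q_single, Algebra.algebraMap_eq_smul_one]

lemma e_mul_self_of_null {a : Fin (p + q + r)} (ha : p + q ≤ (a : ℕ)) : 𝐞 a * 𝐞 a = 0 := by
  rw [e_mul_self, w_eq_zero_of_null ha, zero_smul]

lemma e_mul_e_of_ne {a b : Fin (p + q + r)} (h : a ≠ b) : 𝐞 a * 𝐞 b = -(𝐞 b * 𝐞 a) := by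
  refine ι_mul_ι_comm_of_isOrtho ?_
  rw [QuadraticMap.isOrtho_def, Q_single, Q_single, Q, QuadraticMap.weightedSumSquares_apply,
    Fintype.sum_eq_add a b h]
  · simp [h, h.symm]
  · rintro c ⟨hca, hcb⟩
    simp [hca, hcb]

lemma isUnit_e {a : Fin (p + q + r)} (ha : (a : ℕ) < p + q) : IsUnit (𝐞 a) := by
  have h : 𝐞 a * (w 𝔽 p q r a • 𝐞 a) = 1 := by
    rw [mul_smul_comm, e_mul_self, smul_smul, w_mul_self_of_lt ha, one_smul]
  exact isUnit_iff_exists.2 ⟨_, h, by rwa [smul_mul_assoc, ← mul_smul_comm]⟩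

lemma ι_eq_sum_smul_e (v : Fin (p + q + r) → 𝔽) : ι (Q 𝔽 p q r) v = ∑ a, v a • 𝐞 a := by
  conv_lhs => rw [pi_eq_sum_univ' v]
  simp [map_sum, e]

lemma mul_eq_involute_mul_of_anticomm {x : 𝒢} (h : ∀ a, x * 𝐞 a = -(𝐞 a * x)) (y : 𝒢) :
    x * y = involute y * x := by
  induction y using CliffordAlgebra.induction with
  | algebraMap c => rw [AlgHom.commutes, Algebra.commutes]
  | ι v =>
    rw [involute_ι, ι_eq_sum_smul_e]
    simp only [Finset.mul_sum, Finset.sum_mul, mul_smul_comm, smul_mul_assoc, h, smul_neg,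
      ← Finset.sum_neg_distrib, neg_mul]
  | mul y z hy hz => rw [map_mul, ← mul_assoc, hy, mul_assoc, hz, ← mul_assoc]
  | add y z hy hz => rw [map_add, mul_add, add_mul, hy, hz]

lemma commute_of_commute_e {x : 𝒢} (h : ∀ a, Commute x (𝐞 a)) (y : 𝒢) : Commute x y := by
  induction y using CliffordAlgebra.induction with
  | algebraMap c => exact Algebra.commute_algebraMap_right c x
  | ι v => simpa only [ι_eq_sum_smul_e] using Commute.sum_right _ _ _ fun a _ => (h a).smul_right _
  | mul y z hy hz => exact hy.mul_right hz
  | add y z hy hz => exact hy.add_right hz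

lemma e_mul_of_null {a : Fin (p + q + r)} (ha : p + q ≤ (a : ℕ)) (y : 𝒢) :
    𝐞 a * y = involute y * 𝐞 a := by
  refine mul_eq_involute_mul_of_anticomm (fun b => ?_) y
  obtain rfl | hab := eq_or_ne a b
  · rw [e_mul_self_of_null ha, neg_zero]
  · exact e_mul_e_of_ne hab

lemma mul_e_of_null {a : Fin (p + q + r)} (ha : p + q ≤ (a : ℕ)) (y : 𝒢) :
    y * 𝐞 a = 𝐞 a * involute y := by
  rw [e_mul_of_null ha, involute_involute]

@[simp] lemma eProd_nil : eProd 𝔽 p q r [] = 1 := rfl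

@[simp] lemma eProd_cons (a : Fin (p + q + r)) (l : List (Fin (p + q + r))) :
    eProd 𝔽 p q r (a :: l) = 𝐞 a * eProd 𝔽 p q r l := by
  simp [eProd]

lemma eProd_append (l₁ l₂ : List (Fin (p + q + r))) :
    eProd 𝔽 p q r (l₁ ++ l₂) = eProd 𝔽 p q r l₁ * eProd 𝔽 p q r l₂ := by
  simp [eProd]

lemma eTop_eq_eProd : 𝐈 = eProd 𝔽 p q r (List.finRange (p + q + r)) := by
  rw [eTop, eProd, List.ofFn_eq_map]

lemma e_mul_eProd_of_not_mem {a : Fin (p + q + r)} {l : List (Fin (p + q + r))} (h : a ∉ l) :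
    𝐞 a * eProd 𝔽 p q r l = (-1 : 𝔽) ^ l.length • (eProd 𝔽 p q r l * 𝐞 a) := by
  induction l with
  | nil => simp
  | cons b l ih =>
    rw [List.mem_cons, not_or] at h
    rw [eProd_cons, ← mul_assoc, e_mul_e_of_ne h.1, neg_mul, mul_assoc, ih h.2, mul_smul_comm,
      List.length_cons, pow_succ, mul_assoc]
    module

lemma e_mul_eProd_of_mem {a : Fin (p + q + r)} {l : List (Fin (p + q + r))} (hl : l.Nodup)
    (h : a ∈ l) : 𝐞 a * eProd 𝔽 p q r l = -((-1 : 𝔽) ^ l.length • (eProd 𝔽 p q r l * 𝐞 a)) := by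
  induction l with
  | nil => simp at h
  | cons b l ih =>
    rw [List.nodup_cons] at hl
    obtain rfl | hab := eq_or_ne a b
    · rw [eProd_cons, mul_assoc, e_mul_eProd_of_not_mem hl.1, mul_smul_comm, List.length_cons,
        pow_succ]
      module
    · rw [eProd_cons, ← mul_assoc, e_mul_e_of_ne hab, neg_mul, mul_assoc,
        ih hl.2 ((List.mem_cons.1 h).resolve_left hab), mul_neg, mul_smul_comm, List.length_cons,
        pow_succ, mul_assoc]
      module

lemma e_mul_eProd_of_null_mem {a : Fin (p + q + r)} (ha : p + q ≤ (a : ℕ))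
    {l : List (Fin (p + q + r))} (h : a ∈ l) : 𝐞 a * eProd 𝔽 p q r l = 0 := by
  induction l with
  | nil => simp at h
  | cons b l ih =>
    rw [eProd_cons, ← mul_assoc]
    obtain rfl | hab := eq_or_ne a b
    · rw [e_mul_self_of_null ha, zero_mul]
    · rw [e_mul_of_null ha, mul_assoc, ih ((List.mem_cons.1 h).resolve_left hab), mul_zero]

lemma involute_eProd (l : List (Fin (p + q + r))) :
    involute (eProd 𝔽 p q r l) = (-1 : 𝔽) ^ l.length • eProd 𝔽 p q r l := by
  induction l with
  | nil => simp
  | cons b l ih =>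
    rw [eProd_cons, map_mul, ih, e, involute_ι, ← e, mul_smul_comm, neg_mul, List.length_cons,
      pow_succ]
    module

lemma eProd_mul_self {l : List (Fin (p + q + r))} (hl : l.Nodup) :
    ∃ c : 𝔽, eProd 𝔽 p q r l * eProd 𝔽 p q r l = c • 1 := by
  induction l with
  | nil => exact ⟨1, by simp⟩
  | cons b l ih =>
    rw [List.nodup_cons] at hl
    obtain ⟨c, hc⟩ := ih hl.2
    refine ⟨(-1) ^ l.length * w 𝔽 p q r b * c, ?_⟩
    calc eProd 𝔽 p q r (b :: l) * eProd 𝔽 p q r (b :: l)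
        = 𝐞 b * eProd 𝔽 p q r l * 𝐞 b * eProd 𝔽 p q r l := by simp only [eProd_cons, mul_assoc]
      _ = ((-1) ^ l.length * w 𝔽 p q r b) • (eProd 𝔽 p q r l * eProd 𝔽 p q r l) := by
        rw [e_mul_eProd_of_not_mem hl.1, smul_mul_assoc, smul_mul_assoc,
          mul_assoc (eProd 𝔽 p q r l) (𝐞 b) (𝐞 b), e_mul_self, mul_smul_comm, smul_mul_assoc,
          mul_one, smul_smul]
      _ = ((-1) ^ l.length * w 𝔽 p q r b * c) • 1 := by rw [hc, smul_smul]

lemma e_mul_eTop (a : Fin (p + q + r)) : 𝐞 a * 𝐈 = -((-1 : 𝔽) ^ (p + q + r) • (𝐈 * 𝐞 a)) := by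
  rw [eTop_eq_eProd, e_mul_eProd_of_mem (List.nodup_finRange _) (List.mem_finRange a),
    List.length_finRange]

lemma commute_eTop_of_odd (hodd : Odd (p + q + r)) (y : 𝒢) : Commute 𝐈 y := by
  refine commute_of_commute_e (fun a => ?_) y
  have h := e_mul_eTop (𝔽 := 𝔽) a
  rw [hodd.neg_one_pow, neg_one_smul, neg_neg] at h
  exact h.symm

lemma eTop_mul_eq_involute_mul (heven : Even (p + q + r)) (y : 𝒢) :
    𝐈 * y = involute y * 𝐈 :=
  mul_eq_involute_mul_of_anticomm
    (fun a => by rw [e_mul_eTop, heven.neg_one_pow, one_smul, neg_neg]) y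

lemma involute_eTop : involute 𝐈 = (-1 : 𝔽) ^ (p + q + r) • 𝐈 := by
  rw [eTop_eq_eProd, involute_eProd, List.length_finRange]

lemma eTop_mul_self : ∃ c : 𝔽, 𝐈 * 𝐈 = c • 1 := by
  rw [eTop_eq_eProd]
  exact eProd_mul_self (List.nodup_finRange _)

lemma e_mul_eTop_of_null {a : Fin (p + q + r)} (ha : p + q ≤ (a : ℕ)) : 𝐞 a * 𝐈 = 0 := by
  rw [eTop_eq_eProd]
  exact e_mul_eProd_of_null_mem ha (List.mem_finRange a)

lemma eTop_mul_e_of_null {a : Fin (p + q + r)} (ha : p + q ≤ (a : ℕ)) : 𝐈 * 𝐞 a = 0 := by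
  have h := e_mul_eTop (𝔽 := 𝔽) a
  rw [e_mul_eTop_of_null ha, eq_comm, neg_eq_zero, smul_eq_zero] at h
  exact h.resolve_left (pow_ne_zero _ (neg_ne_zero.2 one_ne_zero))

lemma contractLeft_proj_eProd_mul {a : Fin (p + q + r)} {l : List (Fin (p + q + r))} (h : a ∉ l)
    {z : 𝒢} (hz : contractLeft (LinearMap.proj (R := 𝔽) a) z = 0) :
    contractLeft (LinearMap.proj (R := 𝔽) a) (eProd 𝔽 p q r l * z) = 0 := by
  induction l with
  | nil => rwa [eProd_nil, one_mul]
  | cons b l ih =>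
    rw [List.mem_cons, not_or] at h
    rw [eProd_cons, mul_assoc, e, contractLeft_ι_mul, ← e, ih h.2, LinearMap.proj_apply,
      Pi.single_eq_of_ne h.1, zero_smul, mul_zero, sub_zero]

lemma eq_zero_of_e_mul_eq_zero {a : Fin (p + q + r)} {z : 𝒢}
    (hz : contractLeft (LinearMap.proj (R := 𝔽) a) z = 0) (h : 𝐞 a * z = 0) : z = 0 := by
  have h' := congrArg (contractLeft (LinearMap.proj (R := 𝔽) a)) h
  rwa [e, contractLeft_ι_mul, hz, mul_zero, sub_zero, map_zero, LinearMap.proj_apply,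
    Pi.single_eq_same, one_smul] at h'

lemma eProd_ne_zero {l : List (Fin (p + q + r))} (hl : l.Nodup) : eProd 𝔽 p q r l ≠ 0 := by
  induction l with
  | nil => exact one_ne_zero
  | cons a l ih =>
    rw [List.nodup_cons] at hl
    have hc := contractLeft_proj_eProd_mul (z := (1 : 𝒢)) hl.1 (contractLeft_one _ _)
    rw [mul_one] at hc
    exact fun h => ih hl.2 (eq_zero_of_e_mul_eq_zero hc h)

lemma linearIndependent_one_eTop (hn : 1 ≤ p + q + r) :
    LinearIndependent 𝔽 ![(1 : 𝒢), 𝐈] := by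
  obtain ⟨a, l, hal⟩ := List.exists_cons_of_ne_nil (l := List.finRange (p + q + r))
    (List.ne_nil_of_length_pos (by rw [List.length_finRange]; omega))
  have hnd := List.nodup_cons.1 (hal ▸ List.nodup_finRange (p + q + r))
  have hl := contractLeft_proj_eProd_mul (z := (1 : 𝒢)) hnd.1 (contractLeft_one _ _)
  rw [mul_one] at hl
  have hI : contractLeft (LinearMap.proj (R := 𝔽) a) 𝐈 = eProd 𝔽 p q r l := by
    rw [eTop_eq_eProd, hal, eProd_cons, e, contractLeft_ι_mul, hl, LinearMap.proj_apply,
      Pi.single_eq_same, one_smul, mul_zero, sub_zero]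
  refine LinearIndependent.pair_iff.2 fun s t hst => ?_
  have ht : t = 0 := by
    have h := congrArg (contractLeft (LinearMap.proj (R := 𝔽) a)) hst
    rw [map_add, map_smul, map_smul, contractLeft_one, hI, smul_zero, zero_add, map_zero] at h
    exact (smul_eq_zero.1 h).resolve_right (eProd_ne_zero hnd.2)
  subst ht
  rw [zero_smul, add_zero, smul_eq_zero] at hst
  exact ⟨hst.resolve_right one_ne_zero, rfl⟩

/-! ### The radical -/

lemma mul_mem_radG_left (y : 𝒢) {x : 𝒢} (hx : x ∈ radG 𝔽 p q r) : y * x ∈ radG 𝔽 p q r := by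
  refine (Submodule.span_le (p := (radG 𝔽 p q r).comap (LinearMap.mulLeft 𝔽 y))).2 ?_ hx
  rintro _ ⟨u, v, a, ha, rfl⟩
  exact Submodule.subset_span ⟨y * u, v, a, ha, by simp only [LinearMap.mulLeft_apply, mul_assoc]⟩

lemma mul_mem_radG_right {x : 𝒢} (hx : x ∈ radG 𝔽 p q r) (y : 𝒢) : x * y ∈ radG 𝔽 p q r := by
  refine (Submodule.span_le (p := (radG 𝔽 p q r).comap (LinearMap.mulRight 𝔽 y))).2 ?_ hx
  rintro _ ⟨u, v, a, ha, rfl⟩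
  exact Submodule.subset_span ⟨u, v * y, a, ha, by simp only [LinearMap.mulRight_apply, mul_assoc]⟩

lemma e_mem_radG {a : Fin (p + q + r)} (ha : p + q ≤ (a : ℕ)) : 𝐞 a ∈ radG 𝔽 p q r :=
  Submodule.subset_span ⟨1, 1, a, ha, by rw [one_mul, mul_one]⟩

lemma involute_mem_radG {x : 𝒢} (hx : x ∈ radG 𝔽 p q r) : involute x ∈ radG 𝔽 p q r := by
  refine (Submodule.span_le (p := (radG 𝔽 p q r).comap involute.toLinearMap)).2 ?_ hx
  rintro _ ⟨u, v, a, ha, rfl⟩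
  have h : involute (u * 𝐞 a * v) = -(involute u * 𝐞 a * involute v) := by
    rw [map_mul, map_mul, e, involute_ι, mul_neg, neg_mul]
  simpa [h] using mul_mem_radG_right (mul_mem_radG_left (involute u) (e_mem_radG ha)) (involute v)

lemma radG_mul_eTop {x : 𝒢} (hx : x ∈ radG 𝔽 p q r) : x * 𝐈 = 0 := by
  refine (Submodule.span_le (p := LinearMap.ker (LinearMap.mulRight 𝔽 𝐈))).2 ?_ hx
  rintro _ ⟨u, v, a, ha, rfl⟩
  simp only [SetLike.mem_coe, LinearMap.mem_ker, LinearMap.mulRight_apply]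
  rw [mul_assoc u, e_mul_of_null ha, mul_assoc, mul_assoc, e_mul_eTop_of_null ha, mul_zero,
    mul_zero]

lemma eTop_mul_radG {x : 𝒢} (hx : x ∈ radG 𝔽 p q r) : 𝐈 * x = 0 := by
  refine (Submodule.span_le (p := LinearMap.ker (LinearMap.mulLeft 𝔽 𝐈))).2 ?_ hx
  rintro _ ⟨u, v, a, ha, rfl⟩
  simp only [SetLike.mem_coe, LinearMap.mem_ker, LinearMap.mulLeft_apply]
  rw [mul_e_of_null ha, ← mul_assoc, ← mul_assoc, eTop_mul_e_of_null ha, zero_mul, zero_mul]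

variable (𝔽 p q r) in
def nullProdSpan (k : ℕ) : Submodule 𝔽 (G 𝔽 p q r) :=
  Submodule.span 𝔽 {x | ∃ (l : List (Fin (p + q + r))) (u : G 𝔽 p q r),
    l.length = k ∧ (∀ a ∈ l, p + q ≤ (a : ℕ)) ∧ x = eProd 𝔽 p q r l * u}

lemma radG_le_nullProdSpan_one : radG 𝔽 p q r ≤ nullProdSpan 𝔽 p q r 1 := by
  rw [radG, Submodule.span_le]
  rintro _ ⟨u, v, a, ha, rfl⟩
  refine Submodule.subset_span ⟨[a], involute u * v, rfl, by simpa using ha, ?_⟩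
  rw [mul_e_of_null ha, eProd_cons, eProd_nil, mul_one, mul_assoc]

lemma nullProdSpan_mul_radG_le (k : ℕ) :
    nullProdSpan 𝔽 p q r k * radG 𝔽 p q r ≤ nullProdSpan 𝔽 p q r (k + 1) := by
  rw [nullProdSpan, radG, Submodule.span_mul_span, Submodule.span_le]
  rintro _ ⟨_, ⟨l, u, hl, hnull, rfl⟩, _, ⟨u', v', a, ha, rfl⟩, rfl⟩
  refine Submodule.subset_span ⟨l ++ [a], involute (u * u') * v', by simp [hl], ?_, ?_⟩
  · simpa [or_imp, forall_and] using ⟨hnull, ha⟩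
  · rw [eProd_append, eProd_cons, eProd_nil, mul_one]
    calc eProd 𝔽 p q r l * u * (u' * 𝐞 a * v') = eProd 𝔽 p q r l * (u * u' * 𝐞 a) * v' := by
          simp only [mul_assoc]
      _ = _ := by rw [mul_e_of_null ha]; simp only [mul_assoc]

lemma eProd_eq_zero_of_not_nodup {l : List (Fin (p + q + r))} (hnull : ∀ a ∈ l, p + q ≤ (a : ℕ))
    (hl : ¬ l.Nodup) : eProd 𝔽 p q r l = 0 := by
  induction l with
  | nil => exact absurd List.nodup_nil hl
  | cons b l ih =>
    rw [List.forall_mem_cons] at hnull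
    rw [eProd_cons]
    by_cases hb : b ∈ l
    · exact e_mul_eProd_of_null_mem hnull.1 hb
    · rw [ih hnull.2 fun h => hl (List.nodup_cons.2 ⟨hb, h⟩), mul_zero]

lemma not_nodup_of_null {l : List (Fin (p + q + r))} (hnull : ∀ a ∈ l, p + q ≤ (a : ℕ))
    (hlen : r < l.length) : ¬ l.Nodup := by
  intro hl
  have hsub : l.toFinset ⊆ Finset.univ.filter fun a : Fin (p + q + r) => ¬ (a : ℕ) < p + q :=
    fun a ha => by simpa using hnull a (List.mem_toFinset.1 ha)
  have hcard := Finset.card_filter_add_card_filter_not (s := Finset.univ)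
    (fun a : Fin (p + q + r) => (a : ℕ) < p + q)
  have := Finset.card_le_card hsub
  rw [List.toFinset_card_of_nodup hl] at this
  rw [Fin.card_filter_val_lt, Finset.card_univ, Fintype.card_fin] at hcard
  omega

lemma nullProdSpan_eq_bot : nullProdSpan 𝔽 p q r (r + 1) = ⊥ := by
  rw [eq_bot_iff, nullProdSpan, Submodule.span_le]
  rintro _ ⟨l, u, hl, hnull, rfl⟩
  rw [eProd_eq_zero_of_not_nodup hnull (not_nodup_of_null hnull (by omega)), zero_mul]
  exact Submodule.zero_mem _

lemma isNilpotent_of_mem_radG {x : 𝒢} (hx : x ∈ radG 𝔽 p q r) : IsNilpotent x := by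
  have hpow : ∀ k, x ^ (k + 1) ∈ nullProdSpan 𝔽 p q r (k + 1) := fun k => by
    induction k with
    | zero => simpa using radG_le_nullProdSpan_one hx
    | succ k ih => rw [pow_succ]; exact nullProdSpan_mul_radG_le _ (Submodule.mul_mem_mul ih hx)
  refine ⟨r + 1, ?_⟩
  simpa [nullProdSpan_eq_bot] using hpow r

lemma isUnit_sub_of_mem_radG {T x : 𝒢} (hT : IsUnit T) (hx : x ∈ radG 𝔽 p q r) :
    IsUnit (T - x) := by
  have h : T - x = T * (1 - Ring.inverse T * x) := by
    rw [mul_sub, mul_one, Ring.mul_inverse_cancel_left _ _ hT]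
  rw [h]
  exact hT.mul (isNilpotent_of_mem_radG (mul_mem_radG_left _ hx)).isUnit_one_sub

variable (𝔽 p q r) in
def nullProj : G 𝔽 p q r →ₐ[𝔽] G 𝔽 p q r :=
  CliffordAlgebra.map
    { toLinearMap := LinearMap.pi fun i => if (i : ℕ) < p + q then LinearMap.proj i else 0
      map_app' := fun v => by
        simp only [Q, QuadraticMap.weightedSumSquares_apply]
        refine Finset.sum_congr rfl fun i _ => ?_
        by_cases h : (i : ℕ) < p + q
        · simp [h]
        · simp [h, w_eq_zero_of_null (not_lt.1 h)] }

lemma nullProj_ι (v : Fin (p + q + r) → 𝔽) :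
    nullProj 𝔽 p q r (ι (Q 𝔽 p q r) v) =
      ι (Q 𝔽 p q r) fun i => if (i : ℕ) < p + q then v i else 0 := by
  rw [nullProj, map_apply_ι]
  congr 1
  ext i
  change (if (i : ℕ) < p + q then LinearMap.proj i else 0 : (Fin (p + q + r) → 𝔽) →ₗ[𝔽] 𝔽) v = _
  split_ifs <;> rfl

lemma sub_nullProj_mem_radG (y : 𝒢) : y - nullProj 𝔽 p q r y ∈ radG 𝔽 p q r := by
  induction y using CliffordAlgebra.induction with
  | algebraMap c => simp
  | ι v =>
    rw [nullProj_ι, ← map_sub, ι_eq_sum_smul_e]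
    refine Submodule.sum_mem _ fun a _ => ?_
    by_cases h : (a : ℕ) < p + q
    · simp [h]
    · exact Submodule.smul_mem _ _ (e_mem_radG (not_lt.1 h))
  | mul x y hx hy =>
    have h : x * y - nullProj 𝔽 p q r (x * y) =
        (x - nullProj 𝔽 p q r x) * y + nullProj 𝔽 p q r x * (y - nullProj 𝔽 p q r y) := by
      rw [map_mul]; noncomm_ring
    rw [h]
    exact add_mem (mul_mem_radG_right hx y) (mul_mem_radG_left _ hy)
  | add x y hx hy =>
    rw [map_add, add_sub_add_comm]
    exact add_mem hx hy

lemma contractLeft_proj_nullProj {a : Fin (p + q + r)} (ha : p + q ≤ (a : ℕ)) (y : 𝒢) :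
    contractLeft (LinearMap.proj (R := 𝔽) a) (nullProj 𝔽 p q r y) = 0 := by
  induction y using CliffordAlgebra.left_induction with
  | algebraMap c => rw [AlgHom.commutes, contractLeft_algebraMap]
  | add x y hx hy => rw [map_add, map_add, hx, hy, add_zero]
  | ι_mul x v hx =>
    rw [map_mul, nullProj_ι, contractLeft_ι_mul, hx, mul_zero, sub_zero, LinearMap.proj_apply,
      if_neg (not_lt.2 ha), zero_smul]

lemma eq_zero_of_eProd_mul_eq_zero {l : List (Fin (p + q + r))} (hl : l.Nodup) {z : 𝒢}
    (hz : ∀ a ∈ l, p + q ≤ (a : ℕ) → contractLeft (LinearMap.proj (R := 𝔽) a) z = 0)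
    (h : eProd 𝔽 p q r l * z = 0) : z = 0 := by
  induction l with
  | nil => rwa [eProd_nil, one_mul] at h
  | cons a l ih =>
    rw [List.nodup_cons] at hl
    rw [List.forall_mem_cons] at hz
    refine ih hl.2 hz.2 ?_
    rw [eProd_cons, mul_assoc] at h
    by_cases ha : p + q ≤ (a : ℕ)
    · exact eq_zero_of_e_mul_eq_zero (contractLeft_proj_eProd_mul hl.1 (hz.1 ha)) h
    · exact (isUnit_e (not_le.1 ha)).mul_right_eq_zero.1 h

lemma mem_radG_of_eTop_mul_eq_zero {y : 𝒢} (h : 𝐈 * y = 0) : y ∈ radG 𝔽 p q r := by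
  have hP : 𝐈 * nullProj 𝔽 p q r y = 0 := by
    rw [← sub_sub_cancel y (nullProj 𝔽 p q r y), mul_sub, h,
      eTop_mul_radG (sub_nullProj_mem_radG y), sub_zero]
  rw [eTop_eq_eProd] at hP
  have h0 := eq_zero_of_eProd_mul_eq_zero (List.nodup_finRange _)
    (fun a _ ha => contractLeft_proj_nullProj ha y) hP
  simpa [h0] using sub_nullProj_mem_radG y

/-! ### The subalgebra `𝒢⁰ + 𝒢ⁿ` -/

lemma mem_G0_sup_Gn_iff {x : 𝒢} : x ∈ 𝒲 ↔ ∃ α β : 𝔽, α • 1 + β • 𝐈 = x := by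
  simp [Submodule.mem_sup, G0, Gn, Submodule.mem_span_singleton]

lemma smul_one_add_smul_eTop_mem (α β : 𝔽) : α • 1 + β • 𝐈 ∈ 𝒲 :=
  mem_G0_sup_Gn_iff.2 ⟨α, β, rfl⟩

lemma involute_smul_one_add_smul_eTop (α β : 𝔽) :
    involute (α • 1 + β • 𝐈) = α • 1 + ((-1) ^ (p + q + r) * β) • 𝐈 := by
  rw [map_add, map_smul, map_smul, map_one, involute_eTop, smul_smul, mul_comm]

lemma one_mem_G0_sup_Gn : (1 : 𝒢) ∈ 𝒲 := by
  simpa using smul_one_add_smul_eTop_mem (𝔽 := 𝔽) (p := p) (q := q) (r := r) 1 0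

lemma eTop_mem_G0_sup_Gn : 𝐈 ∈ 𝒲 := by
  simpa using smul_one_add_smul_eTop_mem (𝔽 := 𝔽) (p := p) (q := q) (r := r) 0 1

lemma involute_mem_G0_sup_Gn {x : 𝒢} (hx : x ∈ 𝒲) : involute x ∈ 𝒲 := by
  obtain ⟨α, β, rfl⟩ := mem_G0_sup_Gn_iff.1 hx
  rw [involute_smul_one_add_smul_eTop]
  exact smul_one_add_smul_eTop_mem _ _

lemma smul_one_add_smul_eTop_mul {c : 𝔽} (hc : 𝐈 * 𝐈 = c • 1) (α β γ δ : 𝔽) :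
    (α • 1 + β • 𝐈) * (γ • 1 + δ • 𝐈) = (α * γ + β * δ * c) • (1 : 𝒢) + (α * δ + β * γ) • 𝐈 := by
  simp only [add_mul, mul_add, smul_mul_smul_comm, one_mul, mul_one, hc, smul_smul]
  module

lemma mul_mem_G0_sup_Gn {x y : 𝒢} (hx : x ∈ 𝒲) (hy : y ∈ 𝒲) : x * y ∈ 𝒲 := by
  obtain ⟨c, hc⟩ := eTop_mul_self (𝔽 := 𝔽) (p := p) (q := q) (r := r)
  obtain ⟨α, β, rfl⟩ := mem_G0_sup_Gn_iff.1 hx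
  obtain ⟨γ, δ, rfl⟩ := mem_G0_sup_Gn_iff.1 hy
  rw [smul_one_add_smul_eTop_mul hc]
  exact smul_one_add_smul_eTop_mem _ _

lemma commute_of_mem_G0_sup_Gn (hodd : Odd (p + q + r)) {x : 𝒢} (hx : x ∈ 𝒲) (y : 𝒢) :
    Commute x y := by
  obtain ⟨α, β, rfl⟩ := mem_G0_sup_Gn_iff.1 hx
  exact ((Commute.one_left y).smul_left α).add_left ((commute_eTop_of_odd hodd y).smul_left β)

lemma eTop_ne_smul_one (hn : 1 ≤ p + q + r) (c : 𝔽) : 𝐈 ≠ c • 1 := fun h =>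
  one_ne_zero ((linearIndependent_one_eTop hn).eq_of_pair
    (s := 0) (t := 1) (s' := c) (t' := 0) (by simp [h])).2

lemma mul_eTop_ne_smul (hn : 1 ≤ p + q + r) {T : 𝒢} (hT : IsUnit T) (c : 𝔽) :
    T * 𝐈 ≠ c • T := fun h =>
  eTop_ne_smul_one hn c (by rwa [← mul_smul_one, hT.mul_right_inj] at h)

lemma coeffs_of_mul_self_eq_smul_one (hn : 1 ≤ p + q + r) {c d α β : 𝔽} (hc : 𝐈 * 𝐈 = c • 1)
    (h : (α • 1 + β • 𝐈) * (α • 1 + β • 𝐈) = d • 1) : α * α + β * β * c = d ∧ α * β = 0 := by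
  rw [smul_one_add_smul_eTop_mul hc, ← add_zero (d • (1 : 𝒢)), ← zero_smul 𝔽 𝐈] at h
  obtain ⟨h1, h2⟩ := (linearIndependent_one_eTop hn).eq_of_pair h
  exact ⟨h1, by linear_combination h2 / 2⟩

/-! ### The groups `Γ^{0n}` and `Γ̌^{0n}` -/

lemma mem_Epm_iff {T : 𝒢} :
    T ∈ Epm 𝔽 p q r ↔ IsUnit T ∧ ∃ ε : 𝔽, ε * ε = 1 ∧ involute T = ε • T := by
  simp only [Epm, ux, Geven, Godd, Set.mem_union, Set.mem_setOf_eq, SetLike.mem_coe,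
    Submodule.mem_mk, AddSubmonoid.mem_mk, AddSubsemigroup.mem_mk, mul_self_eq_one_iff]
  constructor
  · rintro (⟨h, hT⟩ | ⟨h, hT⟩)
    · exact ⟨hT, 1, Or.inl rfl, by rw [h, one_smul]⟩
    · exact ⟨hT, -1, Or.inr rfl, by rw [h, neg_one_smul]⟩
  · rintro ⟨hT, ε, rfl | rfl, h⟩
    · exact Or.inl ⟨by rwa [one_smul] at h, hT⟩
    · exact Or.inr ⟨by rwa [neg_one_smul] at h, hT⟩

lemma mul_inverse_mem_iff {M₀ : Type*} [MonoidWithZero M₀] {W : Set M₀} {T : M₀} (hT : IsUnit T)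
    (A : M₀) :
    A * Ring.inverse T ∈ W ↔ ∃ U ∈ W, A = U * T :=
  ⟨fun h => ⟨_, h, (Ring.inverse_mul_cancel_right _ _ hT).symm⟩,
    fun ⟨U, hU, h⟩ => by rwa [h, Ring.mul_inverse_cancel_right _ _ hT]⟩

lemma mem_gammaAd_iff {W : Submodule 𝔽 𝒢} {T : 𝒢} :
    T ∈ gammaAd 𝔽 p q r W ↔ IsUnit T ∧ ∀ U ∈ W, ∃ U' ∈ W, T * U = U' * T :=
  and_congr_right fun hT => forall₂_congr fun _ _ => mul_inverse_mem_iff hT _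

lemma mem_gammaTw_iff {W : Submodule 𝔽 𝒢} {T : 𝒢} :
    T ∈ gammaTw 𝔽 p q r W ↔ IsUnit T ∧ ∀ U ∈ W, ∃ U' ∈ W, involute T * U = U' * T :=
  and_congr_right fun hT => forall₂_congr fun _ _ => mul_inverse_mem_iff hT _

lemma gammaAd_eq_of_odd (hodd : Odd (p + q + r)) : gammaAd 𝔽 p q r 𝒲 = {x | IsUnit x} := by
  ext T
  rw [mem_gammaAd_iff]
  exact ⟨And.left, fun hT =>
    ⟨hT, fun U hU => ⟨U, hU, (commute_of_mem_G0_sup_Gn hodd hU T).eq.symm⟩⟩⟩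

lemma mem_Epm_mul_of_sub_mem_radG {T E : 𝒢} {ε : 𝔽} (hT : IsUnit T) (hε : ε * ε = 1)
    (hE : involute E = ε • E) (h : T - E ∈ radG 𝔽 p q r) :
    T ∈ Epm 𝔽 p q r * ux 𝔽 p q r ↑(G0 𝔽 p q r ⊔ radG 𝔽 p q r) := by
  have hEu : IsUnit E := by simpa using isUnit_sub_of_mem_radG hT h
  refine Set.mem_mul.2 ⟨E, mem_Epm_iff.2 ⟨hEu, ε, hε, hE⟩, Ring.inverse E * T,
    ⟨?_, hEu.ringInverse.mul hT⟩, Ring.mul_inverse_cancel_left _ _ hEu⟩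
  have hS : Ring.inverse E * T = 1 + Ring.inverse E * (T - E) := by
    rw [mul_sub, Ring.inverse_mul_cancel _ hEu]; abel
  rw [hS]
  exact Submodule.add_mem_sup (Submodule.mem_span_singleton_self 1) (mul_mem_radG_left _ h)

lemma exists_mul_eTop_eq_smul (hn : 1 ≤ p + q + r) {T U : 𝒢} (hT : IsUnit T) (hU : U ∈ 𝒲)
    (h : T * 𝐈 = U * T) : ∃ β : 𝔽, T * 𝐈 = β • (𝐈 * T) := by
  obtain ⟨c, hc⟩ := eTop_mul_self (𝔽 := 𝔽) (p := p) (q := q) (r := r)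
  obtain ⟨α, β, rfl⟩ := mem_G0_sup_Gn_iff.1 hU
  have hsq : (α • 1 + β • 𝐈) * (α • 1 + β • 𝐈) = c • (1 : 𝒢) := by
    rw [← hT.mul_left_inj]
    calc (α • 1 + β • 𝐈) * (α • 1 + β • 𝐈) * T = T * (𝐈 * 𝐈) := by
          rw [mul_assoc, ← h, ← mul_assoc, ← h, mul_assoc]
      _ = c • 1 * T := by rw [hc, mul_smul_one, smul_one_mul]
  obtain ⟨-, hαβ⟩ := coeffs_of_mul_self_eq_smul_one hn hc hsq
  rcases mul_eq_zero.1 hαβ with rfl | rfl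
  · exact ⟨β, by rw [h, zero_smul, zero_add, smul_mul_assoc]⟩
  · exact absurd (by rw [h, zero_smul, add_zero, smul_one_mul]) (mul_eTop_ne_smul hn hT α)

lemma mem_Epm_mul_of_mul_eTop_eq_smul (heven : Even (p + q + r)) {T : 𝒢} (hT : IsUnit T) {β : 𝔽}
    (h : T * 𝐈 = β • (𝐈 * T)) : T ∈ Epm 𝔽 p q r * ux 𝔽 p q r ↑(G0 𝔽 p q r ⊔ radG 𝔽 p q r) := by
  set ρ := involute T - β • T with hρ_def
  have hρ : ρ ∈ radG 𝔽 p q r := mem_radG_of_eTop_mul_eq_zero (by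
    rw [mul_sub, mul_smul_comm, eTop_mul_eq_involute_mul heven (involute T), involute_involute, h,
      sub_self])
  have hβ : β * β = 1 := by
    by_contra hne
    have hmem : (1 - β * β) • T ∈ radG 𝔽 p q r := by
      have h1 : (1 - β * β) • T = β • ρ + involute ρ := by
        rw [hρ_def, map_sub, map_smul, involute_involute]; module
      rw [h1]
      exact add_mem (Submodule.smul_mem _ _ hρ) (involute_mem_radG hρ)
    exact (isNilpotent_of_mem_radG
      ((Submodule.smul_mem_iff _ (sub_ne_zero.2 (Ne.symm hne))).1 hmem)).not_isUnit hT
  refine mem_Epm_mul_of_sub_mem_radG (E := (2⁻¹ : 𝔽) • (T + β • involute T)) hT hβ ?_ ?_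
  · rw [map_smul, map_add, map_smul, involute_involute]
    linear_combination (norm := module) ((-2⁻¹ : 𝔽) * hβ) • involute T
  · have h2 : T - (2⁻¹ : 𝔽) • (T + β • involute T) = -(2⁻¹ * β) • ρ := by
      rw [hρ_def]
      linear_combination (norm := module) ((-2⁻¹ : 𝔽) * hβ) • T
    rw [h2]
    exact Submodule.smul_mem _ _ hρ

lemma commute_of_mem_G0_sup_radG {S U : 𝒢} (hS : S ∈ G0 𝔽 p q r ⊔ radG 𝔽 p q r) (hU : U ∈ 𝒲) :
    Commute S U := by
  obtain ⟨_, h0, ρ, hρ, rfl⟩ := Submodule.mem_sup.1 hS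
  obtain ⟨c, rfl⟩ := Submodule.mem_span_singleton.1 h0
  obtain ⟨α, β, rfl⟩ := mem_G0_sup_Gn_iff.1 hU
  have hρI : Commute ρ 𝐈 := by rw [commute_iff_eq, radG_mul_eTop hρ, eTop_mul_radG hρ]
  exact ((Commute.one_left _).smul_left c).add_left
    (((Commute.one_right ρ).smul_right α).add_right (hρI.smul_right β))

lemma exists_mul_eq_mul_of_involute_eq_smul (heven : Even (p + q + r)) {E U : 𝒢} {ε : 𝔽}
    (hε : ε * ε = 1) (hE : involute E = ε • E) (hU : U ∈ 𝒲) : ∃ U' ∈ 𝒲, E * U = U' * E := by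
  obtain ⟨α, β, rfl⟩ := mem_G0_sup_Gn_iff.1 hU
  have hEI : E * 𝐈 = ε • (𝐈 * E) := by
    rw [eTop_mul_eq_involute_mul heven, hE, smul_mul_assoc, smul_smul, hε, one_smul]
  refine ⟨α • 1 + (ε * β) • 𝐈, smul_one_add_smul_eTop_mem _ _, ?_⟩
  rw [mul_add, add_mul, mul_smul_comm, mul_smul_comm, mul_one, hEI, smul_mul_assoc, smul_mul_assoc,
    one_mul]
  module

lemma gammaAd_eq_of_even (hn : 1 ≤ p + q + r) (heven : Even (p + q + r)) :
    gammaAd 𝔽 p q r 𝒲 = Epm 𝔽 p q r * ux 𝔽 p q r ↑(G0 𝔽 p q r ⊔ radG 𝔽 p q r) := by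
  ext T
  rw [mem_gammaAd_iff]
  constructor
  · rintro ⟨hT, h⟩
    obtain ⟨U, hU, hTU⟩ := h 𝐈 eTop_mem_G0_sup_Gn
    obtain ⟨β, hβ⟩ := exists_mul_eTop_eq_smul hn hT hU hTU
    exact mem_Epm_mul_of_mul_eTop_eq_smul heven hT hβ
  · rintro ⟨E, hE, S, ⟨hS, hSu⟩, rfl⟩
    obtain ⟨hEu, ε, hε, hEε⟩ := mem_Epm_iff.1 hE
    refine ⟨hEu.mul hSu, fun U hU => ?_⟩
    obtain ⟨U', hU', hEU⟩ := exists_mul_eq_mul_of_involute_eq_smul heven hε hEε hU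
    exact ⟨U', hU', by rw [mul_assoc, (commute_of_mem_G0_sup_radG hS hU).eq, ← mul_assoc, hEU,
      mul_assoc]⟩

lemma mem_Epm_of_involute_eq_mul (hn : 1 ≤ p + q + r) (heven : Even (p + q + r)) {T w : 𝒢}
    (hT : IsUnit T) (hw : w ∈ 𝒲) (h : involute T = w * T) : T ∈ Epm 𝔽 p q r := by
  obtain ⟨c, hc⟩ := eTop_mul_self (𝔽 := 𝔽) (p := p) (q := q) (r := r)
  obtain ⟨α, β, rfl⟩ := mem_G0_sup_Gn_iff.1 hw
  have hw' : involute (α • 1 + β • 𝐈) = α • 1 + β • 𝐈 := by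
    rw [involute_smul_one_add_smul_eTop, heven.neg_one_pow, one_mul]
  have hsq : (α • 1 + β • 𝐈) * (α • 1 + β • 𝐈) = (1 : 𝔽) • (1 : 𝒢) := by
    rw [one_smul, ← hT.mul_eq_right, mul_assoc, ← h, ← hw', ← map_mul, ← h, involute_involute]
  obtain ⟨hα, hαβ⟩ := coeffs_of_mul_self_eq_smul_one hn hc hsq
  rcases mul_eq_zero.1 hαβ with rfl | rfl
  · refine absurd ?_ (mul_eTop_ne_smul hn hT (β * c))
    have hIT := eTop_mul_eq_involute_mul heven (involute T)
    rw [involute_involute] at hIT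
    rw [← hIT, h, zero_smul, zero_add, smul_mul_assoc, mul_smul_comm, ← mul_assoc, hc,
      smul_one_mul, smul_smul]
  · refine mem_Epm_iff.2 ⟨hT, α, by simpa using hα, ?_⟩
    rw [h, zero_smul, add_zero, smul_one_mul]

lemma gammaTw_eq_of_even (hn : 1 ≤ p + q + r) (heven : Even (p + q + r)) :
    gammaTw 𝔽 p q r 𝒲 = Epm 𝔽 p q r := by
  ext T
  rw [mem_gammaTw_iff]
  constructor
  · rintro ⟨hT, h⟩
    obtain ⟨w, hw, hTw⟩ := h 1 one_mem_G0_sup_Gn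
    rw [mul_one] at hTw
    exact mem_Epm_of_involute_eq_mul hn heven hT hw hTw
  · intro hT
    obtain ⟨hTu, ε, hε, hTε⟩ := mem_Epm_iff.1 hT
    refine ⟨hTu, fun U hU => ?_⟩
    obtain ⟨U', hU', hTU⟩ := exists_mul_eq_mul_of_involute_eq_smul heven hε hTε hU
    exact ⟨ε • U', Submodule.smul_mem _ _ hU', by rw [hTε, smul_mul_assoc, hTU, smul_mul_assoc]⟩

lemma exists_involute_mul_self_eq_smul_one (hodd : Odd (p + q + r)) {S : 𝒢} (hS : S ∈ 𝒲) :
    ∃ c : 𝔽, involute S * S = c • 1 := by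
  obtain ⟨d, hd⟩ := eTop_mul_self (𝔽 := 𝔽) (p := p) (q := q) (r := r)
  obtain ⟨α, β, rfl⟩ := mem_G0_sup_Gn_iff.1 hS
  rw [involute_smul_one_add_smul_eTop, hodd.neg_one_pow, smul_one_add_smul_eTop_mul hd]
  exact ⟨_, by rw [show α * β + -1 * β * α = 0 by ring, zero_smul, add_zero]⟩

lemma exists_involute_add_self_eq_smul_one (hodd : Odd (p + q + r)) {w : 𝒢} (hw : w ∈ 𝒲) :
    ∃ a : 𝔽, involute w + w = a • 1 := by
  obtain ⟨α, β, rfl⟩ := mem_G0_sup_Gn_iff.1 hw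
  rw [involute_smul_one_add_smul_eTop, hodd.neg_one_pow]
  exact ⟨2 * α, by module⟩

lemma exists_involute_mul_eq_mul (hodd : Odd (p + q + r)) {S U : 𝒢} (hS : S ∈ 𝒲) (hSu : IsUnit S)
    (hU : U ∈ 𝒲) : ∃ V ∈ 𝒲, involute S * U = V * S := by
  obtain ⟨c, hc⟩ := exists_involute_mul_self_eq_smul_one hodd hS
  have hc0 : c ≠ 0 := by
    rintro rfl
    rw [zero_smul, hSu.mul_left_eq_zero] at hc
    exact not_isUnit_zero (by rwa [← involute_involute S, hc, map_zero] at hSu)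
  have hV := mul_mem_G0_sup_Gn (mul_mem_G0_sup_Gn (involute_mem_G0_sup_Gn hS) hU)
    (involute_mem_G0_sup_Gn hS)
  refine ⟨c⁻¹ • (involute S * U * involute S), Submodule.smul_mem _ _ hV, ?_⟩
  rw [smul_mul_assoc, mul_assoc _ (involute S), hc, mul_smul_one, smul_smul, inv_mul_cancel₀ hc0,
    one_smul]

lemma exists_mul_eq_smul_involute (hodd : Odd (p + q + r)) {w : 𝒢} (hw : w ∈ 𝒲)
    (h : involute w * w = 1) :
    ∃ S ∈ 𝒲, IsUnit S ∧ ∃ ε : 𝔽, ε * ε = 1 ∧ w * S = ε • involute S := by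
  obtain ⟨a, ha⟩ := exists_involute_add_self_eq_smul_one hodd hw
  obtain ⟨ε, hε, hεa⟩ : ∃ ε : 𝔽, ε * ε = 1 ∧ 2 + ε * a ≠ 0 := by
    by_cases ha2 : a = -2
    · exact ⟨-1, by norm_num, by rw [ha2]; norm_num⟩
    · exact ⟨1, by norm_num, fun h0 => ha2 (by linear_combination h0)⟩
  have hSW : 1 + ε • involute w ∈ 𝒲 :=
    add_mem one_mem_G0_sup_Gn (Submodule.smul_mem _ _ (involute_mem_G0_sup_Gn hw))
  have hS : involute (1 + ε • involute w) = 1 + ε • w := by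
    rw [map_add, map_one, map_smul, involute_involute]
  have hSS : (1 + ε • involute w) * involute (1 + ε • involute w) = (2 + ε * a) • 1 := by
    rw [hS, add_mul, mul_add, mul_add, one_mul, one_mul, mul_one, smul_mul_smul_comm, h, hε]
    linear_combination (norm := module) ε • ha
  refine ⟨_, hSW, isUnit_iff_exists.2 ⟨(2 + ε * a)⁻¹ • involute (1 + ε • involute w), ?_, ?_⟩, ε,
    hε, ?_⟩
  · rw [mul_smul_comm, hSS, smul_smul, inv_mul_cancel₀ hεa, one_smul]
  · rw [smul_mul_assoc, ← (commute_of_mem_G0_sup_Gn hodd hSW _).eq, hSS, smul_smul,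
      inv_mul_cancel₀ hεa, one_smul]
  · rw [hS, mul_add, mul_one, mul_smul_comm, (commute_of_mem_G0_sup_Gn hodd hw _).eq, h]
    linear_combination (norm := module) (-1 * hε) • w

lemma mem_Epm_mul_of_involute_eq_mul (hodd : Odd (p + q + r)) {T w : 𝒢} (hT : IsUnit T)
    (hw : w ∈ 𝒲) (h : involute T = w * T) : T ∈ Epm 𝔽 p q r * ux 𝔽 p q r ↑𝒲 := by
  have hww : involute w * w = 1 := by
    rw [← hT.mul_eq_right, mul_assoc, ← h, ← map_mul, ← h, involute_involute]
  obtain ⟨S, hS, hSu, ε, hε, hwS⟩ := exists_mul_eq_smul_involute hodd hw hww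
  have hES : T * Ring.inverse S * S = T := Ring.inverse_mul_cancel_right _ _ hSu
  have hE : involute (T * Ring.inverse S) = ε • (T * Ring.inverse S) := by
    rw [← (hSu.map involute).mul_left_inj]
    calc involute (T * Ring.inverse S) * involute S = w * (T * Ring.inverse S * S) := by
          rw [← map_mul, hES, h]
      _ = T * Ring.inverse S * (w * S) := by
          rw [← mul_assoc, (commute_of_mem_G0_sup_Gn hodd hw _).eq, mul_assoc]
      _ = ε • (T * Ring.inverse S) * involute S := by rw [hwS, mul_smul_comm, smul_mul_assoc]
  exact Set.mem_mul.2 ⟨_, mem_Epm_iff.2 ⟨hT.mul hSu.ringInverse, ε, hε, hE⟩, S, ⟨hS, hSu⟩, hES⟩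

lemma gammaTw_eq_of_odd (hodd : Odd (p + q + r)) :
    gammaTw 𝔽 p q r 𝒲 = Epm 𝔽 p q r * ux 𝔽 p q r ↑𝒲 := by
  ext T
  rw [mem_gammaTw_iff]
  constructor
  · rintro ⟨hT, h⟩
    obtain ⟨w, hw, hTw⟩ := h 1 one_mem_G0_sup_Gn
    rw [mul_one] at hTw
    exact mem_Epm_mul_of_involute_eq_mul hodd hT hw hTw
  · rintro ⟨E, hE, S, ⟨hS, hSu⟩, rfl⟩
    obtain ⟨hEu, ε, -, hEε⟩ := mem_Epm_iff.1 hE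
    refine ⟨hEu.mul hSu, fun U hU => ?_⟩
    obtain ⟨V, hV, hSV⟩ := exists_involute_mul_eq_mul hodd hS hSu hU
    refine ⟨ε • V, Submodule.smul_mem _ _ hV, ?_⟩
    rw [map_mul, hEε, smul_mul_assoc, smul_mul_assoc, mul_assoc, hSV, ← mul_assoc,
      (commute_of_mem_G0_sup_Gn hodd hV E).eq.symm, mul_assoc, smul_mul_assoc]

end

/-- The groups `Γ^{0n}` and `Γ̌^{0n}`. -/
theorem stmt19 (hn : 1 ≤ p + q + r) :
    (Odd (p + q + r) →
      gammaAd 𝔽 p q r (G0 𝔽 p q r ⊔ Gn 𝔽 p q r) = {x : G 𝔽 p q r | IsUnit x}) ∧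
    (Even (p + q + r) →
      gammaAd 𝔽 p q r (G0 𝔽 p q r ⊔ Gn 𝔽 p q r) = Epm 𝔽 p q r * ux 𝔽 p q r ↑(G0 𝔽 p q r ⊔ radG 𝔽 p q r)) ∧
    (Odd (p + q + r) →
      gammaTw 𝔽 p q r (G0 𝔽 p q r ⊔ Gn 𝔽 p q r) = Epm 𝔽 p q r * ux 𝔽 p q r ↑(G0 𝔽 p q r ⊔ Gn 𝔽 p q r)) ∧
    (Even (p + q + r) →
      gammaTw 𝔽 p q r (G0 𝔽 p q r ⊔ Gn 𝔽 p q r) = Epm 𝔽 p q r) :=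
  ⟨gammaAd_eq_of_odd, gammaAd_eq_of_even hn, gammaTw_eq_of_odd, gammaTw_eq_of_even hn⟩

end ClGA
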